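/- arXiv:1303.6089 — 6 statements merged into one kernel-verified Lean document; each statement's English description precedes it below -/
import Mathlib

section
/- If f : I → ℝ is harmonically convex and nonincreasing on an interval I ⊆ (0, ∞), then f is convex on I. -/
/-! The weighted harmonic mean `H = x y / (t x + (1 - t) y)` lies between `x` and `y`, hence in `I`,
and is at most the weighted arithmetic mean `(1 - t) x + t y` (AM–HM). Since `f` is nonincreasing,
`f ((1 - t) x + t y) ≤ f H ≤ t f y + (1 - t) f x`. -/

open Real Set intervalIntegral

def HarmonicallyConvexOn (I : Set ℝ) (f : ℝ → ℝ) : Prop :=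
  ∀ x ∈ I, ∀ y ∈ I, ∀ t ∈ Set.Icc (0:ℝ) 1,
    f (x * y / (t * x + (1 - t) * y)) ≤ t * f y + (1 - t) * f x

section WeightedHarmonicMean

variable {x y t : ℝ}

lemma mul_add_one_sub_mul_pos (hx : 0 < x) (hy : 0 < y) (ht₀ : 0 ≤ t) (ht₁ : t ≤ 1) :
    0 < t * x + (1 - t) * y := by
  rcases ht₀.lt_or_eq with ht | rfl
  · nlinarith
  · simpa using hy

lemma weighted_harm_mean_le_arith_mean (hx : 0 < x) (hy : 0 < y) (ht₀ : 0 ≤ t) (ht₁ : t ≤ 1) :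
    x * y / (t * x + (1 - t) * y) ≤ (1 - t) * x + t * y := by
  rw [div_le_iff₀ (mul_add_one_sub_mul_pos hx hy ht₀ ht₁)]
  -- the difference of the two sides is `t (1 - t) (x - y) ^ 2`
  nlinarith [mul_nonneg (mul_nonneg ht₀ (sub_nonneg.mpr ht₁)) (sq_nonneg (x - y))]

lemma weighted_harm_mean_mem_uIcc (hx : 0 < x) (hy : 0 < y) (ht₀ : 0 ≤ t) (ht₁ : t ≤ 1) :
    x * y / (t * x + (1 - t) * y) ∈ uIcc x y := by
  have hD := mul_add_one_sub_mul_pos hx hy ht₀ ht₁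
  have ht₁' : 0 ≤ 1 - t := sub_nonneg.mpr ht₁
  rw [mem_uIcc, le_div_iff₀ hD, div_le_iff₀ hD, le_div_iff₀ hD, div_le_iff₀ hD]
  rcases le_total x y with hxy | hxy
  · left
    constructor <;>
      nlinarith [mul_nonneg (mul_nonneg hx.le ht₀) (sub_nonneg.mpr hxy),
        mul_nonneg (mul_nonneg hy.le ht₁') (sub_nonneg.mpr hxy)]
  · right
    constructor <;>
      nlinarith [mul_nonneg (mul_nonneg hx.le ht₀) (sub_nonneg.mpr hxy),
        mul_nonneg (mul_nonneg hy.le ht₁') (sub_nonneg.mpr hxy)]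

end WeightedHarmonicMean

theorem stmt1 (I : Set ℝ) (hI : I.OrdConnected) (hIpos : I ⊆ Set.Ioi (0:ℝ))
    (f : ℝ → ℝ) (hharm : HarmonicallyConvexOn I f) (hmono : AntitoneOn f I) :
    ConvexOn ℝ I f := by
  refine ⟨hI.convex, fun x hx y hy a t ha ht hat => ?_⟩
  obtain rfl : a = 1 - t := by linarith
  have hx₀ : 0 < x := hIpos hx
  have hy₀ : 0 < y := hIpos hy
  have ht₁ : t ≤ 1 := by linarith
  have hH : x * y / (t * x + (1 - t) * y) ∈ I :=
    hI.uIcc_subset hx hy (weighted_harm_mean_mem_uIcc hx₀ hy₀ ht ht₁)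
  calc f ((1 - t) • x + t • y) ≤ f (x * y / (t * x + (1 - t) * y)) :=
        hmono hH (hI.convex hx hy ha ht hat) (weighted_harm_mean_le_arith_mean hx₀ hy₀ ht ht₁)
    _ ≤ t * f y + (1 - t) * f x := hharm x hx y hy t ⟨ht, ht₁⟩
    _ = (1 - t) • f x + t • f y := by rw [smul_eq_mul, smul_eq_mul, add_comm]
end

section
/- If f : I → ℝ is harmonically convex and nondecreasing on an interval I ⊆ (−∞, 0), then f is convex on I. -/
/-!
For `x, y < 0` and weights `a + b = 1`, the point `H = x y / (b x + a y)` at which harmonic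
convexity (with `t = b`) bounds `f` by `a f x + b f y` lies between `x` and `y` and, by the
harmonic–arithmetic mean inequality read on the negative axis, to the right of `a x + b y`.
Monotonicity then gives `f (a x + b y) ≤ f H ≤ a f x + b f y`.
-/

open Real Set intervalIntegral

section NegativeHarmonicCombination

variable {x y a b : ℝ}

lemma combo_neg_of_neg (hx : x < 0) (hy : y < 0) (ha : 0 ≤ a) (hb : 0 ≤ b) (hab : a + b = 1) :
    b * x + a * y < 0 :=
  convex_Iio (0 : ℝ) hx hy hb ha (by linarith)

lemma mul_div_combo_mem_uIcc_of_neg (hx : x < 0) (hy : y < 0) (ha : 0 ≤ a) (hb : 0 ≤ b)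
    (hab : a + b = 1) : x * y / (b * x + a * y) ∈ uIcc x y := by
  have hD := combo_neg_of_neg hx hy ha hb hab
  have hD0 := hD.ne
  have hsub_x : x * y / (b * x + a * y) - x = b * (x / (b * x + a * y)) * (y - x) := by
    rw [div_sub' hD0, mul_div_assoc', div_mul_eq_mul_div]
    congr 1
    linear_combination -(x * y) * hab
  have hsub_y : x * y / (b * x + a * y) - y = a * (y / (b * x + a * y)) * (x - y) := by
    rw [div_sub' hD0, mul_div_assoc', div_mul_eq_mul_div]
    congr 1
    linear_combination -(x * y) * hab
  have hxD : 0 < x / (b * x + a * y) := div_pos_of_neg_of_neg hx hD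
  have hyD : 0 < y / (b * x + a * y) := div_pos_of_neg_of_neg hy hD
  rcases le_total x y with hxy | hyx
  · refine mem_uIcc.2 (Or.inl ⟨?_, ?_⟩)
    · linarith [mul_nonneg (mul_nonneg hb hxD.le) (sub_nonneg.2 hxy)]
    · linarith [mul_nonneg (mul_nonneg ha hyD.le) (sub_nonneg.2 hxy)]
  · refine mem_uIcc.2 (Or.inr ⟨?_, ?_⟩)
    · linarith [mul_nonneg (mul_nonneg ha hyD.le) (sub_nonneg.2 hyx)]
    · linarith [mul_nonneg (mul_nonneg hb hxD.le) (sub_nonneg.2 hyx)]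

lemma combo_le_mul_div_combo_of_neg (hx : x < 0) (hy : y < 0) (ha : 0 ≤ a) (hb : 0 ≤ b)
    (hab : a + b = 1) : a * x + b * y ≤ x * y / (b * x + a * y) := by
  rw [le_div_iff_of_neg (combo_neg_of_neg hx hy ha hb hab)]
  have hgap : (a * x + b * y) * (b * x + a * y) - x * y = a * b * (x - y) ^ 2 := by
    obtain rfl : b = 1 - a := by linarith
    ring
  linarith [mul_nonneg (mul_nonneg ha hb) (sq_nonneg (x - y))]

end NegativeHarmonicCombination

theorem stmt2 (I : Set ℝ) (hI : I.OrdConnected) (hIneg : I ⊆ Set.Iio (0:ℝ))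
    (f : ℝ → ℝ) (hharm : HarmonicallyConvexOn I f) (hmono : MonotoneOn f I) :
    ConvexOn ℝ I f := by
  refine ⟨hI.convex, fun x hx y hy a b ha hb hab => ?_⟩
  have hx0 : x < 0 := hIneg hx
  have hy0 : y < 0 := hIneg hy
  have hH : x * y / (b * x + a * y) ∈ I :=
    hI.uIcc_subset hx hy (mul_div_combo_mem_uIcc_of_neg hx0 hy0 ha hb hab)
  have hAH : f (a • x + b • y) ≤ f (x * y / (b * x + a * y)) :=
    hmono (hI.convex hx hy ha hb hab) hH (combo_le_mul_div_combo_of_neg hx0 hy0 ha hb hab)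
  obtain rfl : a = 1 - b := by linarith
  calc f ((1 - b) • x + b • y)
      ≤ f (x * y / (b * x + (1 - b) * y)) := hAH
    _ ≤ b * f y + (1 - b) * f x := hharm x hx y hy b ⟨hb, by linarith⟩
    _ = (1 - b) • f x + b • f y := by rw [smul_eq_mul, smul_eq_mul, add_comm]
end

section
/- Let f : I ⊆ ℝ \ {0} → ℝ be harmonically convex and a, b ∈ I with a < b, with f integrable on [a,b]. Then f(2ab/(a+b)) ≤ (ab/(b−a)) · ∫_a^b f(x)/x² dx ≤ (f(a)+f(b))/2. -/
/-!
Substituting `u = 1 / x` turns harmonic convexity of `f` into ordinary convexity of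
`g u = f (1 / u)` on `[1 / b, 1 / a]`, and turns `(a b / (b - a)) ∫_a^b f x / x² dx` into the
mean value of `g` on that interval. So the claim is the classical Hermite–Hadamard inequality for
`g`: on `[α, β]` the symmetrization `(g u + g (α + β - u)) / 2`, which has the same integral as `g`,
lies between `g ((α + β) / 2)` and `(g α + g β) / 2` by convexity.
-/

open Real Set intervalIntegral

open MeasureTheory

theorem mul_pos_of_zero_notMem_Icc {a b : ℝ} (hab : a ≤ b) (h0 : (0 : ℝ) ∉ Icc a b) :
    0 < a * b := by
  by_contra! h
  exact h0 ⟨by nlinarith, by nlinarith⟩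

theorem zero_notMem_Icc_of_mul_pos {a b : ℝ} (h : 0 < a * b) : (0 : ℝ) ∉ Icc a b :=
  fun ⟨ha, hb⟩ => by nlinarith

theorem mapsTo_inv_Icc_inv {a b : ℝ} (h : 0 < a * b) :
    MapsTo Inv.inv (Icc b⁻¹ a⁻¹) (Icc a b) := by
  rintro u ⟨hbu, hua⟩
  rcases mul_pos_iff.1 h with ⟨ha, hb⟩ | ⟨ha, hb⟩
  · have hu : 0 < u := (inv_pos.2 hb).trans_le hbu
    exact ⟨le_inv_of_le_inv₀ hu hua, inv_le_of_inv_le₀ hb hbu⟩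
  · have hu : u < 0 := hua.trans_lt (inv_lt_zero.2 ha)
    exact ⟨(le_inv_of_neg ha hu).2 hua, (inv_le_of_neg hu hb).2 hbu⟩

theorem HarmonicallyConvexOn.convexOn_comp_inv {I s : Set ℝ} {f : ℝ → ℝ}
    (hf : HarmonicallyConvexOn I f) (hs : Convex ℝ s) (h0 : (0 : ℝ) ∉ s)
    (hsI : MapsTo Inv.inv s I) : ConvexOn ℝ s (fun u => f u⁻¹) := by
  refine ⟨hs, fun u hu v hv t r ht hr htr => ?_⟩
  obtain rfl : r = 1 - t := by linarith
  have hu0 : u ≠ 0 := ne_of_mem_of_not_mem hu h0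
  have hv0 : v ≠ 0 := ne_of_mem_of_not_mem hv h0
  have hw0 : t * u + (1 - t) * v ≠ 0 := ne_of_mem_of_not_mem (hs hu hv ht hr htr) h0
  have key := hf v⁻¹ (hsI hv) u⁻¹ (hsI hu) t ⟨ht, by linarith⟩
  have harg : v⁻¹ * u⁻¹ / (t * v⁻¹ + (1 - t) * u⁻¹) = (t * u + (1 - t) * v)⁻¹ := by
    field_simp
  simpa only [smul_eq_mul, harg] using key

theorem integral_comp_add_sub (g : ℝ → ℝ) (α β : ℝ) :
    ∫ u in α..β, g (α + β - u) = ∫ u in α..β, g u := by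
  rw [integral_comp_sub_left]
  congr 1 <;> ring

section HermiteHadamard

variable {g : ℝ → ℝ} {α β : ℝ}

theorem IntervalIntegrable.comp_add_sub (hg : IntervalIntegrable g volume α β) :
    IntervalIntegrable (fun u => g (α + β - u)) volume α β := by
  simpa using (hg.comp_sub_left (α + β)).symm

theorem integral_eq_integral_half_add_comp_add_sub (hg : IntervalIntegrable g volume α β) :
    ∫ u in α..β, g u = ∫ u in α..β, (g u + g (α + β - u)) / 2 := by
  rw [intervalIntegral.integral_div, integral_add hg hg.comp_add_sub, integral_comp_add_sub]
  ring

theorem ConvexOn.apply_midpoint_le (hg : ConvexOn ℝ (Icc α β) g) {u : ℝ} (hu : u ∈ Icc α β) :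
    g ((α + β) / 2) ≤ (g u + g (α + β - u)) / 2 := by
  have hu' : α + β - u ∈ Icc α β := ⟨by linarith [hu.2], by linarith [hu.1]⟩
  have h := hg.2 hu hu' one_half_pos.le one_half_pos.le (add_halves 1)
  simp only [smul_eq_mul] at h
  calc g ((α + β) / 2) = g (1 / 2 * u + 1 / 2 * (α + β - u)) := by congr 1; ring
    _ ≤ 1 / 2 * g u + 1 / 2 * g (α + β - u) := h
    _ = (g u + g (α + β - u)) / 2 := by ring

theorem ConvexOn.add_apply_add_sub_le (hg : ConvexOn ℝ (Icc α β) g) {u : ℝ} (hu : u ∈ Icc α β) :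
    g u + g (α + β - u) ≤ g α + g β := by
  have hαβ : α ≤ β := hu.1.trans hu.2
  have hα : α ∈ Icc α β := left_mem_Icc.2 hαβ
  have hβ : β ∈ Icc α β := right_mem_Icc.2 hαβ
  obtain ⟨s, t, hs, ht, hst, rfl⟩ := (segment_eq_Icc hαβ).symm ▸ hu
  have hreflect : α + β - (s • α + t • β) = t • α + s • β := by
    simp only [smul_eq_mul]; linear_combination -(α + β) * hst
  rw [hreflect]
  have h₁ := hg.2 hα hβ hs ht hst
  have h₂ := hg.2 hα hβ ht hs (by linarith)
  simp only [smul_eq_mul] at h₁ h₂ ⊢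
  linear_combination h₁ + h₂ + (g α + g β) * hst

theorem ConvexOn.apply_midpoint_le_interval_average (hg : ConvexOn ℝ (Icc α β) g)
    (hαβ : α < β) (hgi : IntervalIntegrable g volume α β) :
    g ((α + β) / 2) ≤ ⨍ u in α..β, g u := by
  rw [interval_average_eq_div, le_div_iff₀ (sub_pos.2 hαβ),
    integral_eq_integral_half_add_comp_add_sub hgi]
  calc g ((α + β) / 2) * (β - α) = ∫ _ in α..β, g ((α + β) / 2) := by simp [mul_comm]
    _ ≤ ∫ u in α..β, (g u + g (α + β - u)) / 2 :=
      integral_mono_on hαβ.le intervalIntegrable_const ((hgi.add hgi.comp_add_sub).div_const 2)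
        fun _ hu => hg.apply_midpoint_le hu

theorem ConvexOn.interval_average_le_add_div_two (hg : ConvexOn ℝ (Icc α β) g)
    (hαβ : α < β) (hgi : IntervalIntegrable g volume α β) :
    ⨍ u in α..β, g u ≤ (g α + g β) / 2 := by
  rw [interval_average_eq_div, div_le_iff₀ (sub_pos.2 hαβ),
    integral_eq_integral_half_add_comp_add_sub hgi]
  calc ∫ u in α..β, (g u + g (α + β - u)) / 2 ≤ ∫ _ in α..β, (g α + g β) / 2 :=
      integral_mono_on hαβ.le ((hgi.add hgi.comp_add_sub).div_const 2) intervalIntegrable_const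
        fun _ hu => by linarith [hg.add_apply_add_sub_le hu]
    _ = (g α + g β) / 2 * (β - α) := by simp; ring

end HermiteHadamard

section ChangeOfVariables

variable {a b : ℝ}

theorem hasDerivAt_inv_of_zero_notMem_uIcc (h0 : (0 : ℝ) ∉ uIcc a b) :
    ∀ x ∈ Ioo (min a b) (max a b), HasDerivAt Inv.inv (-(x ^ 2)⁻¹) x :=
  fun _ hx => hasDerivAt_inv (ne_of_mem_of_not_mem (Ioo_subset_Icc_self hx) h0)

theorem integral_div_sq_eq_integral_comp_inv (f : ℝ → ℝ) (h0 : (0 : ℝ) ∉ uIcc a b) :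
    ∫ x in a..b, f x / x ^ 2 = ∫ u in b⁻¹..a⁻¹, f u⁻¹ := by
  have h := integral_comp_mul_deriv_of_deriv_nonpos (g := fun u => f u⁻¹)
    (continuousOn_inv₀.mono fun x hx => ne_of_mem_of_not_mem hx h0)
    (hasDerivAt_inv_of_zero_notMem_uIcc h0)
    fun _ _ => neg_nonpos.2 (by positivity)
  simp only [Function.comp_apply, inv_inv, mul_neg, intervalIntegral.integral_neg] at h
  rw [integral_symm a⁻¹ b⁻¹, ← h, neg_neg]
  simp only [div_eq_mul_inv]

theorem IntervalIntegrable.comp_inv {f : ℝ → ℝ} (h0 : (0 : ℝ) ∉ uIcc a b)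
    (hf : IntervalIntegrable f volume a b) :
    IntervalIntegrable (fun u => f u⁻¹) volume b⁻¹ a⁻¹ := by
  have h := integrable_comp_mul_deriv_iff_of_deriv_nonpos (g := fun u => f u⁻¹)
    (continuousOn_inv₀.mono fun x hx => ne_of_mem_of_not_mem hx h0)
    (hasDerivAt_inv_of_zero_notMem_uIcc h0)
    fun _ _ => neg_nonpos.2 (by positivity)
  refine (h.1 ?_).symm
  have hcont : ContinuousOn (fun x : ℝ => -(x ^ 2)⁻¹) (uIcc a b) :=
    ((continuous_pow 2).continuousOn.inv₀ fun x hx =>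
      pow_ne_zero 2 (ne_of_mem_of_not_mem hx h0)).neg
  simpa only [Function.comp_apply, inv_inv] using hf.mul_continuousOn hcont

end ChangeOfVariables

theorem stmt5 (I : Set ℝ) (hI : I.OrdConnected) (hI0 : (0:ℝ) ∉ I)
    (f : ℝ → ℝ) (hharm : HarmonicallyConvexOn I f)
    (a b : ℝ) (ha : a ∈ I) (hb : b ∈ I) (hab : a < b)
    (hint : IntervalIntegrable f MeasureTheory.volume a b) :
    f (2 * a * b / (a + b)) ≤ (a * b / (b - a)) * ∫ x in a..b, f x / x ^ 2 ∧
    (a * b / (b - a)) * ∫ x in a..b, f x / x ^ 2 ≤ (f a + f b) / 2 := by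
  have hsub : Icc a b ⊆ I := hI.out ha hb
  have h0 : (0 : ℝ) ∉ Icc a b := fun h => hI0 (hsub h)
  have hpos : 0 < a * b := mul_pos_of_zero_notMem_Icc hab.le h0
  obtain ⟨ha0, hb0⟩ : a ≠ 0 ∧ b ≠ 0 := mul_ne_zero_iff.1 hpos.ne'
  have hwidth : a⁻¹ - b⁻¹ = (b - a) / (a * b) := by field_simp
  have hlt : b⁻¹ < a⁻¹ := by rw [← sub_pos, hwidth]; exact div_pos (sub_pos.2 hab) hpos
  have hcoef : a * b / (b - a) = (a⁻¹ - b⁻¹)⁻¹ := by rw [hwidth, inv_div]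
  have hmid : 2 * a * b / (a + b) = ((b⁻¹ + a⁻¹) / 2)⁻¹ := by
    have : a + b ≠ 0 := by rcases mul_pos_iff.1 hpos with ⟨_, _⟩ | ⟨_, _⟩ <;> intro <;> linarith
    field_simp
  have hconv : ConvexOn ℝ (Icc b⁻¹ a⁻¹) (fun u => f u⁻¹) :=
    hharm.convexOn_comp_inv (convex_Icc _ _) (zero_notMem_Icc_of_mul_pos (by
      rwa [← mul_inv, mul_comm, inv_pos])) ((mapsTo_inv_Icc_inv hpos).mono_right hsub)
  rw [← uIcc_of_le hab.le] at h0
  have hgint : IntervalIntegrable (fun u => f u⁻¹) volume b⁻¹ a⁻¹ := hint.comp_inv h0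
  have hleft := hconv.apply_midpoint_le_interval_average hlt hgint
  have hright := hconv.interval_average_le_add_div_two hlt hgint
  rw [interval_average_eq, smul_eq_mul] at hleft hright
  rw [integral_div_sq_eq_integral_comp_inv f h0, hcoef, hmid]
  exact ⟨hleft, by simpa only [inv_inv, add_comm] using hright⟩
end

section
/- For 0 < a < b, ∫_0^1 |1−2t|/(tb+(1−t)a)² dt = 1/(ab) − (2/(b−a)²) ln((a+b)²/(4ab)). -/
open Real Set intervalIntegral

/-!
On `[0, 1]` the integrand is `|g|` for `g t = (1 - 2t) / (tb + (1 - t)a)²`, which changes sign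
at `t = 1/2`, so the integral is `2P(1/2) - P(0) - P(1)` for an explicit primitive `P` of `g`,
a rational term plus a logarithm.
-/

theorem integral_abs_eq_sub_of_nonneg_of_nonpos {f : ℝ → ℝ} {a b c : ℝ}
    (hab : a ≤ b) (hbc : b ≤ c) (hf : IntervalIntegrable f MeasureTheory.volume a c)
    (hf_nonneg : ∀ x ∈ Icc a b, 0 ≤ f x) (hf_nonpos : ∀ x ∈ Icc b c, f x ≤ 0) :
    ∫ x in a..c, |f x| = (∫ x in a..b, f x) - ∫ x in b..c, f x := by
  have hsub₁ : uIcc a b ⊆ uIcc a c := uIcc_subset_uIcc left_mem_uIcc (mem_uIcc_of_le hab hbc)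
  have hsub₂ : uIcc b c ⊆ uIcc a c := uIcc_subset_uIcc (mem_uIcc_of_le hab hbc) right_mem_uIcc
  rw [← integral_add_adjacent_intervals (hf.abs.mono_set hsub₁) (hf.abs.mono_set hsub₂),
    sub_eq_add_neg, ← integral_neg]
  congr 1
  · refine integral_congr fun x hx ↦ abs_of_nonneg (hf_nonneg x ?_)
    rwa [uIcc_of_le hab] at hx
  · refine integral_congr fun x hx ↦ abs_of_nonpos (hf_nonpos x ?_)
    rwa [uIcc_of_le hbc] at hx

section

variable {a b : ℝ}

theorem convex_combination_pos (ha : 0 < a) (hb : 0 < b) {t : ℝ} (ht : t ∈ Icc (0 : ℝ) 1) :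
    0 < t * b + (1 - t) * a := by
  obtain ⟨ht₀, ht₁⟩ := ht
  nlinarith [mul_le_mul_of_nonneg_left (min_le_right a b) ht₀,
    mul_le_mul_of_nonneg_left (min_le_left a b) (sub_nonneg.2 ht₁), lt_min ha hb]

theorem continuousOn_one_sub_two_mul_div_sq (ha : 0 < a) (hb : 0 < b) :
    ContinuousOn (fun t ↦ (1 - 2 * t) / (t * b + (1 - t) * a) ^ 2) (Icc 0 1) :=
  ContinuousOn.div (by fun_prop) (by fun_prop) fun _ ht ↦
    pow_ne_zero 2 (convex_combination_pos ha hb ht).ne'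

noncomputable def signChangePrimitive (a b s : ℝ) : ℝ :=
  (-(a + b) / (s * b + (1 - s) * a) - 2 * log (s * b + (1 - s) * a)) / (b - a) ^ 2

theorem hasDerivAt_signChangePrimitive (hab : a ≠ b) {t : ℝ} (ht : 0 < t * b + (1 - t) * a) :
    HasDerivAt (signChangePrimitive a b) ((1 - 2 * t) / (t * b + (1 - t) * a) ^ 2) t := by
  have hlin : HasDerivAt (fun s : ℝ ↦ s * b + (1 - s) * a) (b - a) t :=
    (((hasDerivAt_id t).mul_const b).add
      (((hasDerivAt_id t).const_sub 1).mul_const a)).congr_deriv (by ring)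
  refine ((((hasDerivAt_const t (-(a + b))).div hlin ht.ne').sub
    ((hlin.log ht.ne').const_mul 2)).div_const ((b - a) ^ 2)).congr_deriv ?_
  have : b - a ≠ 0 := sub_ne_zero.mpr hab.symm
  have := ht.ne'
  field_simp
  ring

theorem integral_one_sub_two_mul_div_sq (ha : 0 < a) (hb : 0 < b) (hab : a ≠ b) {u v : ℝ}
    (hu : u ∈ Icc (0 : ℝ) 1) (hv : v ∈ Icc (0 : ℝ) 1) :
    ∫ t in u..v, (1 - 2 * t) / (t * b + (1 - t) * a) ^ 2 =
      signChangePrimitive a b v - signChangePrimitive a b u := by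
  have hsub : uIcc u v ⊆ Icc 0 1 := uIcc_subset_Icc hu hv
  refine integral_eq_sub_of_hasDerivAt (fun t ht ↦ ?_)
    ((continuousOn_one_sub_two_mul_div_sq ha hb).mono hsub).intervalIntegrable
  exact hasDerivAt_signChangePrimitive hab (convex_combination_pos ha hb (hsub ht))

end

theorem log_add_sq_div_four_mul {a b : ℝ} (ha : 0 < a) (hb : 0 < b) :
    log ((a + b) ^ 2 / (4 * a * b)) = 2 * log ((a + b) / 2) - log a - log b := by
  rw [show (a + b) ^ 2 / (4 * a * b) = ((a + b) / 2) ^ 2 / a / b by field_simp; ring,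
    log_div (by positivity) hb.ne', log_div (by positivity) ha.ne', log_pow]
  push_cast
  ring

theorem stmt9 (a b : ℝ) (ha : 0 < a) (hab : a < b) :
    ∫ t in (0:ℝ)..1, |1 - 2 * t| / (t * b + (1 - t) * a) ^ 2 =
      1 / (a * b) - 2 / (b - a) ^ 2 * Real.log ((a + b) ^ 2 / (4 * a * b)) := by
  have hb : 0 < b := ha.trans hab
  have h₀ : (0 : ℝ) ∈ Icc (0 : ℝ) 1 := by norm_num
  have h₁ : (1 : ℝ) ∈ Icc (0 : ℝ) 1 := by norm_num
  have h_half : (1 / 2 : ℝ) ∈ Icc (0 : ℝ) 1 := by norm_num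
  have habs : (fun t : ℝ ↦ |1 - 2 * t| / (t * b + (1 - t) * a) ^ 2) =
      fun t ↦ |(1 - 2 * t) / (t * b + (1 - t) * a) ^ 2| := by
    simp only [abs_div, abs_sq]
  rw [habs, integral_abs_eq_sub_of_nonneg_of_nonpos h_half.1 h_half.2
      ((continuousOn_one_sub_two_mul_div_sq ha hb).intervalIntegrable_of_Icc zero_le_one)
      (fun t ht ↦ div_nonneg (by linarith [ht.2]) (sq_nonneg _))
      (fun t ht ↦ div_nonpos_of_nonpos_of_nonneg (by linarith [ht.1]) (sq_nonneg _)),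
    integral_one_sub_two_mul_div_sq ha hb hab.ne h₀ h_half,
    integral_one_sub_two_mul_div_sq ha hb hab.ne h_half h₁, log_add_sq_div_four_mul ha hb]
  have : b - a ≠ 0 := (sub_pos.mpr hab).ne'
  simp only [signChangePrimitive, show (1 / 2 : ℝ) * b + (1 - 1 / 2) * a = (a + b) / 2 by ring,
    zero_mul, sub_zero, one_mul, zero_add, sub_self, add_zero]
  field_simp
  ring
end

section
/- For 0 < a < b, ∫_0^1 (1−t)·|1−2t|/(tb+(1−t)a)² dt = 1/(a(b−a)) − ((3b+a)/(b−a)³) ln((a+b)²/(4ab)). -/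
open Real Set intervalIntegral

/-!
On `[0, 1/2]` and `[1/2, 1]` the absolute value is `±(1 - 2t)`, and `(1 - t)(1 - 2t) / ℓ(t)²`
with `ℓ(t) = tb + (1 - t)a` has an elementary primitive `F` (partial fractions in `ℓ`: a linear, a
logarithmic and a reciprocal term). The integral is therefore `2 F(1/2) - F 0 - F 1`, and `ℓ` takes
the values `a, (a + b)/2, b` at `0, 1/2, 1`.
-/

noncomputable def integrandPrimitive (a b t : ℝ) : ℝ :=
  2 / (b - a) ^ 2 * t - (3 * b + a) / (b - a) ^ 3 * Real.log (t * b + (1 - t) * a)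
    - (a + b) * b / (b - a) ^ 3 / (t * b + (1 - t) * a)

lemma hasDerivAt_integrandPrimitive {a b t : ℝ} (hab : a ≠ b) (ht : t * b + (1 - t) * a ≠ 0) :
    HasDerivAt (integrandPrimitive a b)
      ((1 - t) * (1 - 2 * t) / (t * b + (1 - t) * a) ^ 2) t := by
  have hba : b - a ≠ 0 := sub_ne_zero.mpr hab.symm
  have hlin : HasDerivAt (fun t : ℝ => t * b + (1 - t) * a) (b - a) t :=
    (((hasDerivAt_id' t).mul_const b).add (((hasDerivAt_id' t).const_sub 1).mul_const a)).congr_deriv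
      (by ring)
  have H := (((hasDerivAt_id' t).const_mul (2 / (b - a) ^ 2)).sub
      ((hlin.log ht).const_mul ((3 * b + a) / (b - a) ^ 3))).sub
      ((hasDerivAt_const t ((a + b) * b / (b - a) ^ 3)).div hlin ht)
  refine H.congr_deriv ?_
  set u := t * b + (1 - t) * a with hu
  field_simp
  rw [hu]
  ring

lemma integral_eq_integrandPrimitive_sub {a b c d : ℝ} (hab : a ≠ b)
    (hden : ∀ t ∈ uIcc c d, t * b + (1 - t) * a ≠ 0) :
    ∫ t in c..d, (1 - t) * (1 - 2 * t) / (t * b + (1 - t) * a) ^ 2 =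
      integrandPrimitive a b d - integrandPrimitive a b c :=
  integral_eq_sub_of_hasDerivAt (fun t ht => hasDerivAt_integrandPrimitive hab (hden t ht))
    (ContinuousOn.intervalIntegrable <|
      ContinuousOn.div (by fun_prop) (by fun_prop) fun t ht => pow_ne_zero 2 (hden t ht))

lemma mul_add_one_sub_mul_pos_s11 {a b t : ℝ} (ha : 0 < a) (hb : 0 < b) (ht : t ∈ Icc (0 : ℝ) 1) :
    0 < t * b + (1 - t) * a := by
  rcases ht.1.eq_or_lt with rfl | ht0
  · simpa using ha
  · exact add_pos_of_pos_of_nonneg (mul_pos ht0 hb) (mul_nonneg (sub_nonneg.2 ht.2) ha.le)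

lemma two_mul_integrandPrimitive_half_sub {a b : ℝ} (ha : 0 < a) (hab : a < b) :
    2 * integrandPrimitive a b (1 / 2) - integrandPrimitive a b 0 - integrandPrimitive a b 1 =
      1 / (a * (b - a)) - (3 * b + a) / (b - a) ^ 3 * Real.log ((a + b) ^ 2 / (4 * a * b)) := by
  have hb : 0 < b := ha.trans hab
  have hba : b - a ≠ 0 := sub_ne_zero.mpr hab.ne'
  have hlog : Real.log ((a + b) ^ 2 / (4 * a * b)) =
      2 * Real.log ((a + b) / 2) - Real.log a - Real.log b := by
    rw [show (a + b) ^ 2 / (4 * a * b) = ((a + b) / 2) ^ 2 / (a * b) by ring,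
      Real.log_div (by positivity) (by positivity), Real.log_pow,
      Real.log_mul ha.ne' hb.ne']
    push_cast
    ring
  have e0 : (0 : ℝ) * b + (1 - 0) * a = a := by ring
  have eh : 1 / 2 * b + (1 - 1 / 2) * a = (a + b) / 2 := by ring
  have e1 : (1 : ℝ) * b + (1 - 1) * a = b := by ring
  simp only [integrandPrimitive, e0, eh, e1, hlog]
  field_simp
  ring

theorem stmt11 (a b : ℝ) (ha : 0 < a) (hab : a < b) :
    ∫ t in (0:ℝ)..1, (1 - t) * |1 - 2 * t| / (t * b + (1 - t) * a) ^ 2 =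
      1 / (a * (b - a)) - (3 * b + a) / (b - a) ^ 3 * Real.log ((a + b) ^ 2 / (4 * a * b)) := by
  have hden : ∀ {c d : ℝ}, c ∈ Icc (0 : ℝ) 1 → d ∈ Icc (0 : ℝ) 1 →
      ∀ t ∈ uIcc c d, t * b + (1 - t) * a ≠ 0 :=
    fun hc hd t ht => (mul_add_one_sub_mul_pos_s11 ha (ha.trans hab) (uIcc_subset_Icc hc hd ht)).ne'
  obtain ⟨h0, hhalf, h1⟩ : (0 : ℝ) ∈ Icc 0 1 ∧ (1 / 2 : ℝ) ∈ Icc 0 1 ∧ (1 : ℝ) ∈ Icc 0 1 := by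
    norm_num
  have hint : ∀ {c d : ℝ}, c ∈ Icc (0 : ℝ) 1 → d ∈ Icc (0 : ℝ) 1 → IntervalIntegrable
      (fun t => (1 - t) * |1 - 2 * t| / (t * b + (1 - t) * a) ^ 2) MeasureTheory.volume c d :=
    fun hc hd => ContinuousOn.intervalIntegrable <| ContinuousOn.div (by fun_prop) (by fun_prop)
      fun t ht => pow_ne_zero 2 (hden hc hd t ht)
  have hleft : ∫ t in (0:ℝ)..1 / 2, (1 - t) * |1 - 2 * t| / (t * b + (1 - t) * a) ^ 2 =
      ∫ t in (0:ℝ)..1 / 2, (1 - t) * (1 - 2 * t) / (t * b + (1 - t) * a) ^ 2 :=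
    integral_congr fun t ht => by
      rw [uIcc_of_le (by norm_num)] at ht
      rw [abs_of_nonneg (by linarith [ht.2])]
  have hright : ∫ t in (1 / 2:ℝ)..1, (1 - t) * |1 - 2 * t| / (t * b + (1 - t) * a) ^ 2 =
      -∫ t in (1 / 2:ℝ)..1, (1 - t) * (1 - 2 * t) / (t * b + (1 - t) * a) ^ 2 := by
    rw [← integral_neg]
    refine integral_congr fun t ht => ?_
    rw [uIcc_of_le (by norm_num)] at ht
    rw [abs_of_nonpos (by linarith [ht.1]), mul_neg, neg_div]
  rw [← integral_add_adjacent_intervals (hint h0 hhalf) (hint hhalf h1), hleft, hright,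
    integral_eq_integrandPrimitive_sub hab.ne (hden h0 hhalf),
    integral_eq_integrandPrimitive_sub hab.ne (hden hhalf h1),
    ← two_mul_integrandPrimitive_half_sub ha hab]
  ring
end

section
/- For 0 < a < b, H(a,b) ≤ G(a,b)²/L(a,b) ≤ A(a,b), where H(a,b) = 2ab/(a+b), G(a,b) = √(ab), L(a,b) = (b−a)/(ln b − ln a), A(a,b) = (a+b)/2. -/
open Real Set intervalIntegral

lemma sinh_le_self_mul_cosh {x : ℝ} (hx : 0 ≤ x) : Real.sinh x ≤ x * Real.cosh x := by
  have h : MonotoneOn (fun y => y * Real.cosh y - Real.sinh y) (Set.Ici 0) := by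
    apply monotoneOn_of_deriv_nonneg (convex_Ici 0)
    · exact ((continuous_id.mul Real.continuous_cosh).sub Real.continuous_sinh).continuousOn
    · intro y _
      exact ((differentiable_id.mul Real.differentiable_cosh).sub
        Real.differentiable_sinh).differentiableAt.differentiableWithinAt
    · intro y hy
      rw [interior_Ici, Set.mem_Ioi] at hy
      have hd : HasDerivAt (fun y => y * Real.cosh y - Real.sinh y)
          (1 * Real.cosh y + y * Real.sinh y - Real.cosh y) y :=
        ((hasDerivAt_id y).mul (Real.hasDerivAt_cosh y)).sub (Real.hasDerivAt_sinh y)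
      rw [hd.deriv]
      have : 0 ≤ Real.sinh y := Real.sinh_nonneg_iff.2 hy.le
      nlinarith
  have := h (Set.self_mem_Ici) (Set.mem_Ici.2 hx) hx
  simp at this
  linarith

theorem stmt14 (a b : ℝ) (ha : 0 < a) (hab : a < b) :
    2 * a * b / (a + b) ≤ (Real.sqrt (a * b)) ^ 2 / ((b - a) / (Real.log b - Real.log a)) ∧
    (Real.sqrt (a * b)) ^ 2 / ((b - a) / (Real.log b - Real.log a)) ≤ (a + b) / 2 := by
  have hb : 0 < b := ha.trans hab
  have hsq : Real.sqrt (a * b) ^ 2 = a * b := Real.sq_sqrt (by positivity)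
  have hlog : Real.log a < Real.log b := Real.log_lt_log ha hab
  set x := (Real.log b - Real.log a) / 2 with hxdef
  have hx : 0 < x := by simp only [hxdef]; linarith
  set sa := Real.sqrt a with hsadef
  set sb := Real.sqrt b with hsbdef
  have hsa : sa ^ 2 = a := Real.sq_sqrt ha.le
  have hsb : sb ^ 2 = b := Real.sq_sqrt hb.le
  have hsa0 : 0 < sa := Real.sqrt_pos.2 ha
  have hsb0 : 0 < sb := Real.sqrt_pos.2 hb
  have hex : Real.exp x = sb / sa := by
    rw [hxdef, show Real.log b - Real.log a = Real.log (b / a) from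
      (Real.log_div hb.ne' ha.ne').symm, ← Real.log_sqrt (by positivity),
      Real.exp_log (Real.sqrt_pos.2 (by positivity)), Real.sqrt_div hb.le]
  have henx : Real.exp (-x) = sa / sb := by rw [Real.exp_neg, hex, inv_div]
  have hsinh : Real.sinh x = (b - a) / (2 * (sa * sb)) := by
    rw [Real.sinh_eq, hex, henx, ← hsa, ← hsb]
    field_simp
  have hcosh : Real.cosh x = (a + b) / (2 * (sa * sb)) := by
    rw [Real.cosh_eq, hex, henx, ← hsa, ← hsb]
    field_simp
    ring
  -- key 1 : b - a ≤ x * (a + b)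
  have key1 : b - a ≤ x * (a + b) := by
    have h1 := sinh_le_self_mul_cosh hx.le
    rw [hsinh, hcosh] at h1
    rw [div_le_iff₀ (by positivity)] at h1
    have : x * ((a + b) / (2 * (sa * sb))) * (2 * (sa * sb)) = x * (a + b) := by
      field_simp
    linarith [this ▸ h1]
  -- key 2 : 4 * a * b * x ≤ b^2 - a^2
  have key2 : 4 * (a * b) * x ≤ b ^ 2 - a ^ 2 := by
    have h2 : 2 * x ≤ Real.sinh (2 * x) := Real.self_le_sinh_iff.2 (by linarith)
    have he2 : Real.exp (2 * x) = (sb / sa) ^ 2 := by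
      rw [two_mul, Real.exp_add, hex]; ring
    have hen2 : Real.exp (-(2 * x)) = (sa / sb) ^ 2 := by
      rw [show -(2 * x) = -x + -x by ring, Real.exp_add, henx]; ring
    rw [Real.sinh_eq, he2, hen2] at h2
    have hfact : ((sb / sa) ^ 2 - (sa / sb) ^ 2) / 2 = (b ^ 2 - a ^ 2) / (2 * (a * b)) := by
      rw [← hsa, ← hsb]
      field_simp
    rw [hfact, le_div_iff₀ (by positivity)] at h2
    linarith
  have hL : (b - a) / (Real.log b - Real.log a) = (b - a) / (2 * x) := by
    rw [hxdef]; ring_nf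
  have hval : Real.sqrt (a * b) ^ 2 / ((b - a) / (Real.log b - Real.log a))
      = a * b * (2 * x) / (b - a) := by
    rw [hsq, hL, div_div_eq_mul_div]
  constructor
  · rw [hval, div_le_div_iff₀ (by linarith) (by linarith)]
    nlinarith [mul_pos ha hb]
  · rw [hval, div_le_div_iff₀ (by linarith) (by norm_num : (0:ℝ) < 2)]
    nlinarith
end
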